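/- arXiv:2402.07785 — 2 statements merged into one kernel-verified Lean document; each statement's English description precedes it below -/
import Mathlib

section
/- Let P and Q be probability distributions on the real line supported on [−1, 1], each arising as the distribution of ⟨v, Z⟩ for a unit vector v and a sphere-valued random vector Z. Suppose under both P-source and Q-source distributions, E[⟨Z, μ⟩] ≥ 1 − γ for a common unit vector μ. Then the Wasserstein-1 distance satisfies W₁(P, Q) ≤ 2η + 8γ/η² for every η > 0; in particular, choosing η = γ^{1/3}, W₁(P, Q) ≤ 10·γ^{1/3}. -/
open RealInnerProductSpace MeasureTheory

lemma tlem_aux (t η : ℝ) (ht0 : 0 ≤ t) (ht2 : t ≤ 2) (hη : 0 < η) :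
    t ≤ η + 2 / η ^ 2 * t ^ 2 := by
  have hη2 : (0:ℝ) < η ^ 2 := pow_pos hη 2
  have key : t - η ≤ 2 / η ^ 2 * t ^ 2 := by
    rw [div_mul_eq_mul_div, le_div_iff₀ hη2]
    rcases le_or_gt t η with h | h
    · nlinarith
    · nlinarith
  linarith

lemma aux_side {d : ℕ} {Ω : Type*} [MeasureSpace Ω] (P : Measure Ω) [IsProbabilityMeasure P]
    (Z : Ω → EuclideanSpace ℝ (Fin d)) (hZs : ∀ ω, ‖Z ω‖ = 1)
    (v μ : EuclideanSpace ℝ (Fin d)) (hv : ‖v‖ = 1) (hμ : ‖μ‖ = 1)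
    (γ η : ℝ) (hη : 0 < η)
    (hint : Integrable (fun ω => ⟪Z ω, μ⟫) P)
    (halign : ∫ ω, ⟪Z ω, μ⟫ ∂P ≥ 1 - γ)
    (f : ℝ → ℝ) (hf : LipschitzWith 1 f)
    (hintf : Integrable (fun ω => f ⟪v, Z ω⟫) P) :
    |(∫ ω, f ⟪v, Z ω⟫ ∂P) - f ⟪v, μ⟫| ≤ η + 4 * γ / η ^ 2 := by
  have hpt : ∀ ω, |f ⟪v, Z ω⟫ - f ⟪v, μ⟫| ≤ (η + 4 / η ^ 2) - (4 / η ^ 2) * ⟪Z ω, μ⟫ := by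
    intro ω
    have h1 : |f ⟪v, Z ω⟫ - f ⟪v, μ⟫| ≤ |⟪v, Z ω⟫ - ⟪v, μ⟫| := by
      have := hf.dist_le_mul ⟪v, Z ω⟫ ⟪v, μ⟫
      simpa [Real.dist_eq] using this
    have h2 : |⟪v, Z ω⟫ - ⟪v, μ⟫| ≤ ‖Z ω - μ‖ := by
      rw [← inner_sub_right]
      calc |⟪v, Z ω - μ⟫| ≤ ‖v‖ * ‖Z ω - μ‖ := abs_real_inner_le_norm _ _
        _ = ‖Z ω - μ‖ := by rw [hv, one_mul]
    have hsq : ‖Z ω - μ‖ ^ 2 = 2 - 2 * ⟪Z ω, μ⟫ := by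
      rw [@norm_sub_sq_real, hZs ω, hμ]; ring
    have hle2 : ‖Z ω - μ‖ ≤ 2 := by
      calc ‖Z ω - μ‖ ≤ ‖Z ω‖ + ‖μ‖ := norm_sub_le _ _
        _ = 2 := by rw [hZs ω, hμ]; norm_num
    have h3 := tlem_aux ‖Z ω - μ‖ η (norm_nonneg _) hle2 hη
    rw [hsq] at h3
    have heq : η + 2 / η ^ 2 * (2 - 2 * ⟪Z ω, μ⟫)
        = (η + 4 / η ^ 2) - (4 / η ^ 2) * ⟪Z ω, μ⟫ := by ring
    linarith
  have hg : Integrable (fun ω => f ⟪v, Z ω⟫ - f ⟪v, μ⟫) P := hintf.sub (integrable_const _)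
  have hbound : Integrable (fun ω => (η + 4 / η ^ 2) - (4 / η ^ 2) * ⟪Z ω, μ⟫) P :=
    (integrable_const _).sub (hint.const_mul _)
  have e1 : (∫ ω, f ⟪v, Z ω⟫ ∂P) - f ⟪v, μ⟫ = ∫ ω, (f ⟪v, Z ω⟫ - f ⟪v, μ⟫) ∂P := by
    rw [integral_sub hintf (integrable_const _), integral_const]; simp
  rw [e1]
  have hk : (0:ℝ) < 4 / η ^ 2 := by positivity
  calc |∫ ω, (f ⟪v, Z ω⟫ - f ⟪v, μ⟫) ∂P| ≤ ∫ ω, |f ⟪v, Z ω⟫ - f ⟪v, μ⟫| ∂P :=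
        by simpa [Real.norm_eq_abs] using
          norm_integral_le_integral_norm (fun ω => f ⟪v, Z ω⟫ - f ⟪v, μ⟫) (μ := P)
    _ ≤ ∫ ω, ((η + 4 / η ^ 2) - (4 / η ^ 2) * ⟪Z ω, μ⟫) ∂P :=
        integral_mono hg.abs hbound hpt
    _ = (η + 4 / η ^ 2) - (4 / η ^ 2) * ∫ ω, ⟪Z ω, μ⟫ ∂P := by
        rw [integral_sub (integrable_const _) (hint.const_mul _), integral_const,
          integral_const_mul]
        simp
    _ ≤ η + 4 * γ / η ^ 2 := by
        have h5 := mul_le_mul_of_nonneg_left (show (1:ℝ) - γ ≤ ∫ ω, ⟪Z ω, μ⟫ ∂P from halign) hk.le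
        have h4 : 4 * γ / η ^ 2 = (4 / η ^ 2) * γ := by ring
        nlinarith

theorem wasserstein_dual_bound {d : ℕ} {Ω Ω' : Type*} [MeasureSpace Ω] [MeasureSpace Ω']
    (P : Measure Ω) [IsProbabilityMeasure P]
    (Q : Measure Ω') [IsProbabilityMeasure Q]
    (Z : Ω → EuclideanSpace ℝ (Fin d)) (Z' : Ω' → EuclideanSpace ℝ (Fin d))
    (hZmeas : Measurable Z) (hZ'meas : Measurable Z')
    (hZsphere : ∀ ω, ‖Z ω‖ = 1) (hZ'sphere : ∀ ω, ‖Z' ω‖ = 1)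
    (v μ : EuclideanSpace ℝ (Fin d)) (hv : ‖v‖ = 1) (hμ : ‖μ‖ = 1)
    (γ : ℝ) (hγ : γ ∈ Set.Ioo (0:ℝ) 1)
    (hintZ : Integrable (fun ω => ⟪Z ω, μ⟫) P)
    (hintZ' : Integrable (fun ω => ⟪Z' ω, μ⟫) Q)
    (halignZ : ∫ ω, ⟪Z ω, μ⟫ ∂P ≥ 1 - γ)
    (halignZ' : ∫ ω, ⟪Z' ω, μ⟫ ∂Q ≥ 1 - γ) :
    ∀ f : ℝ → ℝ, LipschitzWith 1 f →
      Integrable (fun ω => f ⟪v, Z ω⟫) P →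
      Integrable (fun ω => f ⟪v, Z' ω⟫) Q →
      (∀ η : ℝ, 0 < η →
        (∫ ω, f ⟪v, Z ω⟫ ∂P) - (∫ ω, f ⟪v, Z' ω⟫ ∂Q) ≤ 2 * η + 8 * γ / η ^ 2) ∧
      (∫ ω, f ⟪v, Z ω⟫ ∂P) - (∫ ω, f ⟪v, Z' ω⟫ ∂Q) ≤ 10 * γ ^ ((1:ℝ)/3) := by
  intro f hf hintfP hintfQ
  obtain ⟨hγ0, hγ1⟩ := hγ
  have main : ∀ η : ℝ, 0 < η →
      (∫ ω, f ⟪v, Z ω⟫ ∂P) - (∫ ω, f ⟪v, Z' ω⟫ ∂Q) ≤ 2 * η + 8 * γ / η ^ 2 := by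
    intro η hη
    have a := aux_side P Z hZsphere v μ hv hμ γ η hη hintZ halignZ f hf hintfP
    have b := aux_side Q Z' hZ'sphere v μ hv hμ γ η hη hintZ' halignZ' f hf hintfQ
    obtain ⟨a1, a2⟩ := abs_le.mp a
    obtain ⟨b1, b2⟩ := abs_le.mp b
    have h8 : 8 * γ / η ^ 2 = 4 * γ / η ^ 2 + 4 * γ / η ^ 2 := by ring
    linarith
  refine ⟨main, ?_⟩
  set η := γ ^ ((1:ℝ)/3) with hηdef
  have hηpos : 0 < η := Real.rpow_pos_of_pos hγ0 _
  have h := main η hηpos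
  have h2 : η ^ 2 = γ ^ ((2:ℝ)/3) := by
    rw [hηdef, ← Real.rpow_natCast (γ ^ ((1:ℝ)/3)) 2, ← Real.rpow_mul hγ0.le]
    norm_num
  have h3 : γ / γ ^ ((2:ℝ)/3) = γ ^ ((1:ℝ)/3) := by
    have h := Real.rpow_sub hγ0 1 ((2:ℝ)/3)
    rw [Real.rpow_one] at h
    rw [← h]
    norm_num
  have h4 : 8 * γ / η ^ 2 = 8 * (γ / γ ^ ((2:ℝ)/3)) := by rw [h2]; ring
  rw [h4, h3] at h
  linarith
end

section
/- Let μ₁, …, μ_C ∈ ℝ^d be unit vectors with C ≤ d + 1, and τ > 0. Then the separation loss L_sep = (1/C)·Σᵢ log[(1/(C−1))·Σ_{j≠i} exp(⟨μᵢ, μⱼ⟩/τ)] satisfies L_sep ≥ −1/(τ(C−1)), with equality when the μᵢ form a simplex ETF (pairwise inner products −1/(C−1)). -/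
open RealInnerProductSpace

theorem separation_loss_lower_bound {d C : ℕ} (hC : 2 ≤ C) (hCd : C ≤ d + 1)
    (τ : ℝ) (hτ : 0 < τ) (μ : Fin C → EuclideanSpace ℝ (Fin d))
    (hnorm : ∀ i, ‖μ i‖ = 1) :
    ((1 / (C : ℝ)) * ∑ i, Real.log ((1 / ((C : ℝ) - 1)) *
        ∑ j ∈ Finset.univ \ {i}, Real.exp (⟪μ i, μ j⟫ / τ))
      ≥ -1 / (τ * ((C : ℝ) - 1))) ∧
    ((∀ i j, i ≠ j → ⟪μ i, μ j⟫ = -1 / ((C : ℝ) - 1)) →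
      (1 / (C : ℝ)) * ∑ i, Real.log ((1 / ((C : ℝ) - 1)) *
        ∑ j ∈ Finset.univ \ {i}, Real.exp (⟪μ i, μ j⟫ / τ))
      = -1 / (τ * ((C : ℝ) - 1))) := by
  have hC2 : (2:ℝ) ≤ (C:ℝ) := by exact_mod_cast hC
  have hC1pos : (0:ℝ) < (C:ℝ) - 1 := by linarith
  have hCpos : (0:ℝ) < (C:ℝ) := by linarith
  have hcard : ∀ i : Fin C, ((Finset.univ \ {i}).card : ℝ) = (C:ℝ) - 1 := by
    intro i
    rw [Finset.card_sdiff_of_subset (by simp), Finset.card_univ, Finset.card_singleton,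
      Fintype.card_fin]
    have : 1 ≤ C := by omega
    push_cast [Nat.cast_sub this]
    ring
  constructor
  · -- lower bound
    have key : ∀ i : Fin C, (1 / ((C : ℝ) - 1)) * ∑ j ∈ Finset.univ \ {i}, (⟪μ i, μ j⟫ / τ) ≤
        Real.log ((1 / ((C : ℝ) - 1)) * ∑ j ∈ Finset.univ \ {i}, Real.exp (⟪μ i, μ j⟫ / τ)) := by
      intro i
      have hne : (Finset.univ \ {i} : Finset (Fin C)).Nonempty := by
        rw [← Finset.card_pos]
        have := hcard i
        have : (0:ℝ) < ((Finset.univ \ {i}).card : ℝ) := by rw [this]; linarith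
        exact_mod_cast this
      have hpos : 0 < (1 / ((C : ℝ) - 1)) * ∑ j ∈ Finset.univ \ {i}, Real.exp (⟪μ i, μ j⟫ / τ) :=
        mul_pos (by positivity) (Finset.sum_pos (fun j _ => Real.exp_pos _) hne)
      rw [Real.le_log_iff_exp_le hpos]
      have := convexOn_exp.map_sum_le (t := Finset.univ \ {i})
        (w := fun _ => 1 / ((C:ℝ) - 1)) (p := fun j => ⟪μ i, μ j⟫ / τ)
        (fun _ _ => by positivity)
        (by rw [Finset.sum_const, nsmul_eq_mul, hcard i]; field_simp)
        (fun _ _ => Set.mem_univ _)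
      simp only [smul_eq_mul] at this
      rwa [Finset.mul_sum, Finset.mul_sum]
    have hsum : -(C:ℝ) ≤ ∑ i : Fin C, ∑ j ∈ Finset.univ \ {i}, ⟪μ i, μ j⟫ := by
      have hexp : ⟪∑ i, μ i, ∑ j, μ j⟫ =
          (∑ i : Fin C, ∑ j ∈ Finset.univ \ {i}, ⟪μ i, μ j⟫) + C := by
        rw [sum_inner]
        have : ∀ i : Fin C, ⟪μ i, ∑ j, μ j⟫ =
            (∑ j ∈ Finset.univ \ {i}, ⟪μ i, μ j⟫) + 1 := by
          intro i
          rw [inner_sum]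
          have := Finset.sum_sdiff (Finset.subset_univ ({i} : Finset (Fin C)))
            (f := fun j => ⟪μ i, μ j⟫)
          rw [← this, Finset.sum_singleton, real_inner_self_eq_norm_sq, hnorm i]
          ring
        rw [Finset.sum_congr rfl (fun i _ => this i), Finset.sum_add_distrib]
        simp
      have h0 : (0:ℝ) ≤ ⟪∑ i, μ i, ∑ j, μ j⟫ := real_inner_self_nonneg
      linarith [hexp ▸ h0]
    have step : ∑ i : Fin C, (1 / ((C : ℝ) - 1)) * ∑ j ∈ Finset.univ \ {i}, (⟪μ i, μ j⟫ / τ) ≤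
        ∑ i : Fin C, Real.log ((1 / ((C : ℝ) - 1)) *
          ∑ j ∈ Finset.univ \ {i}, Real.exp (⟪μ i, μ j⟫ / τ)) :=
      Finset.sum_le_sum (fun i _ => key i)
    have rewr : ∑ i : Fin C, (1 / ((C : ℝ) - 1)) * ∑ j ∈ Finset.univ \ {i}, (⟪μ i, μ j⟫ / τ)
        = (1 / (((C:ℝ) - 1) * τ)) * ∑ i : Fin C, ∑ j ∈ Finset.univ \ {i}, ⟪μ i, μ j⟫ := by
      rw [Finset.mul_sum]
      apply Finset.sum_congr rfl
      intro i _
      rw [Finset.mul_sum, Finset.mul_sum]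
      apply Finset.sum_congr rfl
      intro j _
      field_simp
    have lb : -(C:ℝ) / (((C:ℝ) - 1) * τ) ≤
        ∑ i : Fin C, (1 / ((C : ℝ) - 1)) * ∑ j ∈ Finset.univ \ {i}, (⟪μ i, μ j⟫ / τ) := by
      rw [rewr]
      rw [div_eq_mul_one_div, mul_comm]
      apply mul_le_mul_of_nonneg_left hsum (by positivity)
    rw [ge_iff_le]
    calc -1 / (τ * ((C : ℝ) - 1)) = (1 / (C:ℝ)) * (-(C:ℝ) / (((C:ℝ) - 1) * τ)) := by
          field_simp
      _ ≤ (1 / (C:ℝ)) * ∑ i : Fin C, Real.log ((1 / ((C : ℝ) - 1)) *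
            ∑ j ∈ Finset.univ \ {i}, Real.exp (⟪μ i, μ j⟫ / τ)) := by
          have h2 : -(C:ℝ) / (((C:ℝ) - 1) * τ) ≤ ∑ i : Fin C, Real.log ((1 / ((C : ℝ) - 1)) *
            ∑ j ∈ Finset.univ \ {i}, Real.exp (⟪μ i, μ j⟫ / τ)) := le_trans lb step
          exact mul_le_mul_of_nonneg_left h2 (by positivity)
  · -- equality case
    intro hETF
    have hterm : ∀ i : Fin C, Real.log ((1 / ((C : ℝ) - 1)) *
        ∑ j ∈ Finset.univ \ {i}, Real.exp (⟪μ i, μ j⟫ / τ)) = -1 / (τ * ((C : ℝ) - 1)) := by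
      intro i
      have : ∑ j ∈ Finset.univ \ {i}, Real.exp (⟪μ i, μ j⟫ / τ)
          = ((C:ℝ) - 1) * Real.exp (-1 / (((C:ℝ) - 1) * τ)) := by
        rw [Finset.sum_congr rfl (fun j hj => by
          rw [hETF i j (by simp [Finset.mem_sdiff] at hj; exact fun h => hj (h ▸ rfl))])]
        rw [Finset.sum_const, nsmul_eq_mul, hcard i, div_div]
      rw [this, ← mul_assoc, one_div, inv_mul_cancel₀ (ne_of_gt hC1pos), one_mul,
        Real.log_exp, mul_comm τ]
    rw [Finset.sum_congr rfl (fun i _ => hterm i), Finset.sum_const, nsmul_eq_mul,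
      Finset.card_univ, Fintype.card_fin, ← mul_assoc, one_div,
      inv_mul_cancel₀ (ne_of_gt hCpos), one_mul]
end
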